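/- arXiv:1007.3507 — 2 statements merged into one kernel-verified Lean document; each statement's English description precedes it below -/
import Mathlib

section
/- Let $d\ge2$ and let $h(\theta) = \frac{1}{2d}[2(d-1)e^{\theta} + \frac{2d-1}{1+2(d-1)e^{\theta}} + 1]$ for $\theta \ge \theta_0 := \log\frac{\sqrt{2d-1}-1}{2(d-1)}$ and $h(\theta) = \frac{\sqrt{2d-1}}{d}$ for $\theta < \theta_0$. Then $\log h$ is convex and differentiable on $\mathbb{R}$ (in particular the two pieces match in value and derivative at $\theta_0$), and $h(0) = 1$. -/
/-!
In the variable `u = 1 + 2(d-1)e^θ` the smooth branch is `(u + (2d-1)/u) / (2d)`, which by AM-GM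
is minimal exactly at `u = √(2d-1)`, i.e. at `θ = θ₀`. There it equals `√(2d-1)/d` with zero
derivative, so the constant branch glues on in a `C¹` way. The derivative of `log h` is `0` left
of `θ₀` and `(1 - 1/u) · (u² - (2d-1)) / (u² + (2d-1))` right of it; both factors are nonnegative
and increasing for `u ≥ √(2d-1)`, so this derivative is monotone and `log h` is convex.
-/

open Real Set

theorem hasDerivAt_ite_lt {f g f' g' : ℝ → ℝ} {a x : ℝ}
    (hf : ∀ x ≤ a, HasDerivAt f (f' x) x) (hg : ∀ x ≥ a, HasDerivAt g (g' x) x)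
    (hfg : f a = g a) (hfg' : f' a = g' a) :
    HasDerivAt (fun t => if t < a then f t else g t) (if x < a then f' x else g' x) x := by
  rcases lt_trichotomy x a with hxa | rfl | hax
  · rw [if_pos hxa]
    refine (hf x hxa.le).congr_of_eventuallyEq ?_
    filter_upwards [Iio_mem_nhds hxa] with t (ht : t < a)
    rw [if_pos ht]
  · rw [if_neg (lt_irrefl x), ← hasDerivWithinAt_univ, ← Iic_union_Ici]
    refine HasDerivWithinAt.union ?_ ((hg x le_rfl).hasDerivWithinAt.congr ?_ ?_)
    · rw [← hfg']
      refine (hf x le_rfl).hasDerivWithinAt.congr (fun t ht => ?_) ?_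
      · rcases (mem_Iic.1 ht).lt_or_eq with htx | rfl
        · rw [if_pos htx]
        · rw [if_neg (lt_irrefl _), hfg]
      · rw [if_neg (lt_irrefl x), hfg]
    · exact fun t ht => if_neg (not_lt.2 ht)
    · exact if_neg (lt_irrefl x)
  · rw [if_neg (not_lt.2 hax.le)]
    refine (hg x hax.le).congr_of_eventuallyEq ?_
    filter_upwards [Ioi_mem_nhds hax] with t (ht : a < t)
    rw [if_neg (not_lt.2 ht.le)]

theorem monotone_ite_lt {α β : Type*} [LinearOrder α] [Preorder β] {φ : α → β} {a : α} {b : β}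
    (hφ : MonotoneOn φ (Ici a)) (hb : b ≤ φ a) :
    Monotone (fun x => if x < a then b else φ x) := by
  intro x y hxy
  dsimp only
  by_cases hy : y < a
  · rw [if_pos (hxy.trans_lt hy), if_pos hy]
  by_cases hx : x < a
  · rw [if_pos hx, if_neg hy]
    exact hb.trans (hφ self_mem_Ici (not_lt.1 hy) (not_lt.1 hy))
  · rw [if_neg hx, if_neg hy]
    exact hφ (not_lt.1 hx) (not_lt.1 hy) hxy

noncomputable section

namespace FreeGroupTurns

def branchArg (d θ : ℝ) : ℝ := 1 + 2 * (d - 1) * exp θ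

def smoothBranch (d θ : ℝ) : ℝ :=
  1 / (2 * d) * (2 * (d - 1) * exp θ + (2 * d - 1) / (1 + 2 * (d - 1) * exp θ) + 1)

def logSlope (d u : ℝ) : ℝ := (1 - u⁻¹) * ((u ^ 2 - (2 * d - 1)) / (u ^ 2 + (2 * d - 1)))

def criticalPoint (d : ℝ) : ℝ := log ((√(2 * d - 1) - 1) / (2 * (d - 1)))

def mgfRate (d θ : ℝ) : ℝ :=
  if θ < criticalPoint d then √(2 * d - 1) / d else smoothBranch d θ

variable {d : ℝ}

theorem smoothBranch_eq (d θ : ℝ) :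
    smoothBranch d θ = (branchArg d θ + (2 * d - 1) / branchArg d θ) / (2 * d) := by
  unfold smoothBranch branchArg
  ring

theorem one_le_branchArg (hd : 1 ≤ d) (θ : ℝ) : 1 ≤ branchArg d θ := by
  unfold branchArg
  have : 0 ≤ 2 * (d - 1) * exp θ := by have := exp_pos θ; positivity
  linarith

theorem monotone_branchArg (hd : 1 ≤ d) : Monotone (branchArg d) := by
  intro θ θ' h
  unfold branchArg
  gcongr

theorem hasDerivAt_branchArg (d θ : ℝ) :
    HasDerivAt (branchArg d) (2 * (d - 1) * exp θ) θ :=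
  ((hasDerivAt_exp θ).const_mul _).const_add 1

theorem smoothBranch_pos (hd : 1 ≤ d) (θ : ℝ) : 0 < smoothBranch d θ := by
  have hu : 0 < branchArg d θ := by linarith [one_le_branchArg hd θ]
  have hc : 0 < 2 * d - 1 := by linarith
  have : 0 < d := by linarith
  rw [smoothBranch_eq]
  positivity

theorem hasDerivAt_log_smoothBranch (hd : 1 ≤ d) (θ : ℝ) :
    HasDerivAt (fun t => log (smoothBranch d t)) (logSlope d (branchArg d θ)) θ := by
  have hu := one_le_branchArg hd θ
  have hu0 : branchArg d θ ≠ 0 := by positivity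
  have hu' := hasDerivAt_branchArg d θ
  have hquot : HasDerivAt (fun t => (branchArg d t + (2 * d - 1) / branchArg d t) / (2 * d))
      ((2 * (d - 1) * exp θ + (0 * branchArg d θ - (2 * d - 1) * (2 * (d - 1) * exp θ))
        / branchArg d θ ^ 2) / (2 * d)) θ :=
    (hu'.add ((hasDerivAt_const θ _).div hu' hu0)).div_const _
  rw [funext (smoothBranch_eq d)]
  convert hquot.log (by rw [← smoothBranch_eq]; exact (smoothBranch_pos hd θ).ne') using 1
  unfold logSlope
  rw [show 2 * (d - 1) * exp θ = branchArg d θ - 1 by unfold branchArg; ring]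
  field_simp
  ring

theorem monotoneOn_logSlope (hd : 1 ≤ d) : MonotoneOn (logSlope d) (Ici √(2 * d - 1)) := by
  have hc : 0 < 2 * d - 1 := by linarith
  have hs : 1 ≤ √(2 * d - 1) := by rw [one_le_sqrt]; linarith
  have hsq : √(2 * d - 1) ^ 2 = 2 * d - 1 := sq_sqrt hc.le
  have hsplit : ∀ u, (u ^ 2 - (2 * d - 1)) / (u ^ 2 + (2 * d - 1)) =
      1 - 2 * (2 * d - 1) / (u ^ 2 + (2 * d - 1)) := by
    intro u
    have : u ^ 2 + (2 * d - 1) ≠ 0 := by positivity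
    field_simp
    ring
  intro u hu v hv huv
  rw [mem_Ici] at hu hv
  have hu1 : 1 ≤ u := hs.trans hu
  have huc : 2 * d - 1 ≤ u ^ 2 := hsq ▸ pow_le_pow_left₀ (by positivity) hu 2
  unfold logSlope
  apply mul_le_mul
  · gcongr
  · rw [hsplit, hsplit]
    gcongr
  · exact div_nonneg (by linarith) (by positivity)
  · have : v⁻¹ ≤ 1 := inv_le_one_of_one_le₀ (hu1.trans huv)
    linarith

theorem logSlope_sqrt (hd : 1 ≤ d) : logSlope d √(2 * d - 1) = 0 := by
  rw [logSlope, sq_sqrt (by linarith), sub_self, zero_div, mul_zero]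

theorem exp_criticalPoint (hd : 1 < d) : exp (criticalPoint d) = (√(2 * d - 1) + 1)⁻¹ := by
  have hs : 1 < √(2 * d - 1) := by rw [lt_sqrt zero_le_one]; linarith
  have hsq : √(2 * d - 1) ^ 2 = 2 * d - 1 := sq_sqrt (by linarith)
  have hfactor : 2 * (d - 1) = (√(2 * d - 1) - 1) * (√(2 * d - 1) + 1) := by nlinarith
  rw [criticalPoint, hfactor, div_mul_cancel_left₀ (by linarith)]
  exact exp_log (by positivity)

theorem branchArg_criticalPoint (hd : 1 < d) : branchArg d (criticalPoint d) = √(2 * d - 1) := by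
  have hsq : √(2 * d - 1) ^ 2 = 2 * d - 1 := sq_sqrt (by linarith)
  have : 0 < √(2 * d - 1) + 1 := by positivity
  rw [branchArg, exp_criticalPoint hd]
  field_simp
  nlinarith

theorem criticalPoint_neg (hd : 1 < d) : criticalPoint d < 0 := by
  rw [← exp_lt_one_iff, exp_criticalPoint hd]
  exact inv_lt_one_of_one_lt₀ (by have := sqrt_pos.2 (by linarith : 0 < 2 * d - 1); linarith)

theorem smoothBranch_criticalPoint (hd : 1 < d) :
    smoothBranch d (criticalPoint d) = √(2 * d - 1) / d := by
  have hsq : √(2 * d - 1) ^ 2 = 2 * d - 1 := sq_sqrt (by linarith)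
  have : 0 < √(2 * d - 1) := sqrt_pos.2 (by linarith)
  have : d ≠ 0 := by positivity
  rw [smoothBranch_eq, branchArg_criticalPoint hd]
  nth_rw 2 [← hsq]
  field_simp
  ring

theorem hasDerivAt_smoothBranch_criticalPoint (hd : 1 < d) :
    HasDerivAt (smoothBranch d) 0 (criticalPoint d) := by
  have h := (hasDerivAt_log_smoothBranch hd.le (criticalPoint d)).exp
  rw [branchArg_criticalPoint hd, logSlope_sqrt hd.le, mul_zero] at h
  convert h using 1
  exact funext fun t => (exp_log (smoothBranch_pos hd.le t)).symm

theorem smoothBranch_zero (hd : 1 ≤ d) : smoothBranch d 0 = 1 := by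
  have hc : 2 * d - 1 ≠ 0 := by linarith
  have : d ≠ 0 := by positivity
  rw [smoothBranch, exp_zero, mul_one, show 1 + 2 * (d - 1) = 2 * d - 1 by ring, div_self hc]
  field_simp
  ring

theorem mgfRate_zero (hd : 1 < d) : mgfRate d 0 = 1 := by
  rw [mgfRate, if_neg (not_lt.2 (criticalPoint_neg hd).le), smoothBranch_zero hd.le]

theorem hasDerivAt_log_mgfRate (hd : 1 < d) (θ : ℝ) :
    HasDerivAt (fun t => log (mgfRate d t))
      (if θ < criticalPoint d then 0 else logSlope d (branchArg d θ)) θ := by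
  simp only [mgfRate, apply_ite log]
  refine hasDerivAt_ite_lt (f' := fun _ => 0) (fun x _ => hasDerivAt_const x _)
    (fun x _ => hasDerivAt_log_smoothBranch hd.le x) ?_ ?_
  · rw [smoothBranch_criticalPoint hd]
  · rw [branchArg_criticalPoint hd, logSlope_sqrt hd.le]

theorem differentiable_log_mgfRate (hd : 1 < d) :
    Differentiable ℝ (fun θ => log (mgfRate d θ)) :=
  fun θ => (hasDerivAt_log_mgfRate hd θ).differentiableAt

theorem convexOn_log_mgfRate (hd : 1 < d) :
    ConvexOn ℝ univ (fun θ => log (mgfRate d θ)) := by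
  refine Monotone.convexOn_univ_of_deriv (differentiable_log_mgfRate hd) ?_
  rw [funext fun θ => (hasDerivAt_log_mgfRate hd θ).deriv]
  refine monotone_ite_lt ((monotoneOn_logSlope hd.le).comp
    ((monotone_branchArg hd.le).monotoneOn _) fun θ hθ => ?_) ?_
  · rw [mem_Ici, ← branchArg_criticalPoint hd]
    exact monotone_branchArg hd.le hθ
  · rw [branchArg_criticalPoint hd, logSlope_sqrt hd.le]

end FreeGroupTurns

end

open FreeGroupTurns in
theorem stmt10 (d : ℕ) (hd : 2 ≤ d) (θ0 : ℝ)
    (hθ0 : θ0 = Real.log ((Real.sqrt (2 * d - 1) - 1) / (2 * (d - 1))))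
    (h : ℝ → ℝ)
    (hh : ∀ θ : ℝ, h θ =
      if θ < θ0 then Real.sqrt (2 * d - 1) / d
      else 1 / (2 * d) * (2 * (d - 1) * Real.exp θ
        + (2 * d - 1) / (1 + 2 * (d - 1) * Real.exp θ) + 1)) :
    ConvexOn ℝ Set.univ (fun θ => Real.log (h θ)) ∧
    Differentiable ℝ (fun θ => Real.log (h θ)) ∧
    1 / (2 * d) * (2 * (d - 1) * Real.exp θ0
        + (2 * d - 1) / (1 + 2 * (d - 1) * Real.exp θ0) + 1) = Real.sqrt (2 * d - 1) / d ∧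
    HasDerivAt (fun θ : ℝ => 1 / (2 * d) * (2 * (d - 1) * Real.exp θ
        + (2 * d - 1) / (1 + 2 * (d - 1) * Real.exp θ) + 1)) 0 θ0 ∧
    h 0 = 1 := by
  have hd' : (1 : ℝ) < d := by exact_mod_cast (by omega : 1 < d)
  subst hθ0
  obtain rfl : h = mgfRate d := funext hh
  exact ⟨convexOn_log_mgfRate hd', differentiable_log_mgfRate hd',
    smoothBranch_criticalPoint hd', hasDerivAt_smoothBranch_criticalPoint hd', mgfRate_zero hd'⟩
end

section
/- Let $d\ge2$, and let $U_n = (S_n - \frac{d-1}{d}n)D_n$ where $S_n$ is the biased walk with $P(X_i=1)=\frac{2d-1}{2d}$ and $D_n = L_n - S_n$ in the natural coupling. Then $U_{n+1} = U_n + (X_{n+1} - \frac{d-1}{d})D_n + 1_{\{L_n=0\}}(1 - X_{n+1})(S_{n+1} - \frac{d-1}{d}(n+1))$, and taking expectations, $-4(n+1)P(L_n=0) \le \mathbb{E}U_{n+1} - \mathbb{E}U_n \le 0$. -/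
open MeasureTheory ProbabilityTheory

/-!
Off `{L n = 0}` the reflected and the free walk take the same step, so `D` does not move; at `0`
the reflected walk steps to `1` whatever `X (n + 1)` is, which produces the reflection term. In
expectation the term `(X (n + 1) - c) D n`, `c = (d - 1) / d`, vanishes, since `D n` is a
function of the first `n` steps and `X (n + 1)` is independent of them with mean `c`. The
reflection term is `0` when `X (n + 1) = 1` and `2 (S (n + 1) - c (n + 1)) ∈ [-4 (n + 1), 0]`
when `X (n + 1) = -1`, because `-n ≤ S n ≤ L n = 0` there.
-/

section Integrals

variable {Ω : Type*} [MeasurableSpace Ω] {μ : Measure Ω}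

lemma integral_intCast_of_pm_one [IsProbabilityMeasure μ] {Y : Ω → ℤ} (hY : Measurable Y)
    (hpm : ∀ ω, Y ω = 1 ∨ Y ω = -1) {p : ℝ} (hp : 0 ≤ p)
    (h1 : μ {ω | Y ω = 1} = ENNReal.ofReal p) :
    ∫ ω, (Y ω : ℝ) ∂μ = 2 * p - 1 := by
  have hA : MeasurableSet {ω | Y ω = 1} := hY (measurableSet_singleton 1)
  have hY' : (fun ω => (Y ω : ℝ)) = fun ω => 2 * {ω | Y ω = 1}.indicator 1 ω - 1 := by
    funext ω
    rcases hpm ω with h | h <;> norm_num [h]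
  rw [hY', integral_sub ((integrable_const 1).indicator hA |>.const_mul 2) (integrable_const 1),
    integral_const_mul, integral_indicator_one hA, measureReal_def, h1, ENNReal.toReal_ofReal hp]
  simp

lemma IndepFun.integral_sub_integral_mul_eq_zero [IsProbabilityMeasure μ] {Y Z : Ω → ℝ}
    (h : IndepFun Y Z μ) (hY : AEStronglyMeasurable Y μ) (hZ : Integrable Z μ) :
    ∫ ω, (Z ω - ∫ ω, Z ω ∂μ) * Y ω ∂μ = 0 := by
  have h' : IndepFun (fun ω => Z ω - ∫ ω, Z ω ∂μ) Y μ :=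
    (h.comp measurable_id (measurable_id.sub_const _)).symm
  calc ∫ ω, (Z ω - ∫ ω, Z ω ∂μ) * Y ω ∂μ
      = (∫ ω, (Z ω - ∫ ω, Z ω ∂μ) ∂μ) * ∫ ω, Y ω ∂μ :=
        h'.integral_mul_eq_mul_integral (hZ.sub (integrable_const _)).aestronglyMeasurable hY
    _ = 0 := by simp [integral_sub hZ (integrable_const _)]

lemma integral_sub_integral_eq_of_eq_add {f₀ f₁ g h : Ω → ℝ} (hf₀ : Integrable f₀ μ)
    (hf₁ : Integrable f₁ μ) (hg : Integrable g μ) (heq : ∀ ω, f₁ ω = f₀ ω + g ω + h ω)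
    (hg0 : ∫ ω, g ω ∂μ = 0) : ∫ ω, f₁ ω ∂μ - ∫ ω, f₀ ω ∂μ = ∫ ω, h ω ∂μ := by
  have : ∫ ω, h ω ∂μ = ∫ ω, f₁ ω ∂μ - ∫ ω, f₀ ω ∂μ - ∫ ω, g ω ∂μ := by
    rw [← integral_sub hf₁ hf₀, ← integral_sub (f := fun ω => f₁ ω - f₀ ω) (hf₁.sub hf₀) hg]
    exact integral_congr_ae (ae_of_all _ fun ω => by simp only [heq]; ring)
  rw [this, hg0, sub_zero]

lemma mul_measureReal_le_integral [IsFiniteMeasure μ] {h : Ω → ℝ} {A : Set Ω}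
    (hA : MeasurableSet A) [DecidablePred (· ∈ A)] (a : ℝ) (hh : ∀ ω, h ω ≤ 0)
    (hlow : ∀ ω, a * (if ω ∈ A then 1 else 0) ≤ h ω) : a * μ.real A ≤ ∫ ω, h ω ∂μ := by
  have key : ∫ ω, -h ω ∂μ ≤ ∫ ω, -a * A.indicator 1 ω ∂μ :=
    integral_mono_of_nonneg (ae_of_all _ fun ω => neg_nonneg.mpr (hh ω))
      (((integrable_const 1).indicator hA).const_mul _)
      (ae_of_all _ fun ω => by
        have := hlow ω
        by_cases hω : ω ∈ A <;> simp [hω] at this ⊢ <;> linarith)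
  rw [integral_neg, integral_const_mul, integral_indicator_one hA] at key
  linarith

end Integrals

section Steps

variable {Ω β : Type*} [MeasurableSpace β] (X : ℕ → Ω → β)

abbrev stepsUpTo (n : ℕ) : MeasurableSpace Ω :=
  ⨆ i ∈ Set.Icc 1 n, MeasurableSpace.comap (X i) inferInstance

lemma stepsUpTo_mono : Monotone (stepsUpTo X) :=
  fun _ _ hmn => biSup_mono fun _ hi => ⟨hi.1, hi.2.trans hmn⟩

lemma measurable_stepsUpTo {i n : ℕ} (h1i : 1 ≤ i) (hin : i ≤ n) :
    Measurable[stepsUpTo X n] (X i) :=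
  Measurable.of_comap_le
    (le_biSup (fun i => MeasurableSpace.comap (X i) inferInstance) ⟨h1i, hin⟩)

variable {X} {mΩ : MeasurableSpace Ω}

lemma stepsUpTo_le (hX : ∀ i, Measurable (X i)) (n : ℕ) : stepsUpTo X n ≤ mΩ :=
  iSup₂_le fun i _ => (hX i).comap_le

lemma indepFun_of_measurable_stepsUpTo {μ : Measure Ω} {γ : Type*} [MeasurableSpace γ]
    {f : Ω → γ} {n : ℕ} (hX : ∀ i, Measurable (X i)) (hind : iIndepFun X μ)
    (hf : Measurable[stepsUpTo X n] f) : IndepFun f (X (n + 1)) μ := by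
  have h := indep_iSup_of_disjoint (fun i => (hX i).comap_le)
    ((iIndepFun_iff_iIndep _ _ _).mp hind) (S := Set.Icc 1 n) (T := {n + 1})
    (Set.disjoint_singleton_right.mpr fun h => by simp at h)
  rw [iSup_singleton] at h
  exact (IndepFun_iff_Indep _ _ _).mpr (indep_of_indep_of_le_left h hf.comap_le)

end Steps

structure IsNaturalCoupling {Ω : Type*} (X L S : ℕ → Ω → ℤ) : Prop where
  pm_one : ∀ i ω, X i ω = 1 ∨ X i ω = -1
  L_zero : ∀ ω, L 0 ω = 0
  L_succ : ∀ n ω, L (n + 1) ω = if L n ω = 0 then 1 else L n ω + X (n + 1) ω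
  S_eq : ∀ n ω, S n ω = ∑ i ∈ Finset.range n, X (i + 1) ω

def driftProduct {Ω : Type*} (c : ℝ) (L S : ℕ → Ω → ℤ) (n : ℕ) (ω : Ω) : ℝ :=
  ((S n ω : ℝ) - c * n) * ((L n ω : ℝ) - S n ω)

def reflectionTerm {Ω : Type*} (c : ℝ) (X L S : ℕ → Ω → ℤ) (n : ℕ) (ω : Ω) : ℝ :=
  if L n ω = 0 then (1 - (X (n + 1) ω : ℝ)) * ((S (n + 1) ω : ℝ) - c * (n + 1)) else 0

namespace IsNaturalCoupling

variable {Ω : Type*} {X L S : ℕ → Ω → ℤ} (h : IsNaturalCoupling X L S)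
include h

lemma S_zero (ω : Ω) : S 0 ω = 0 := by simp [h.S_eq]

lemma S_succ (n : ℕ) (ω : Ω) : S (n + 1) ω = S n ω + X (n + 1) ω := by
  simp only [h.S_eq, Finset.sum_range_succ]

lemma abs_X_le (i : ℕ) (ω : Ω) : |X i ω| ≤ 1 := by
  rcases h.pm_one i ω with hx | hx <;> simp [hx]

lemma abs_S_le (n : ℕ) (ω : Ω) : |S n ω| ≤ n := by
  induction n with
  | zero => simp [h.S_zero]
  | succ n ih =>
    have := abs_le.mp (h.abs_X_le (n + 1) ω)
    rw [h.S_succ, abs_le] at *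
    push_cast
    omega

lemma L_nonneg_and_le (n : ℕ) (ω : Ω) : 0 ≤ L n ω ∧ L n ω ≤ n := by
  induction n with
  | zero => simp [h.L_zero]
  | succ n ih =>
    have := abs_le.mp (h.abs_X_le (n + 1) ω)
    rw [h.L_succ, Nat.cast_succ]
    split_ifs <;> omega

lemma S_le_L (n : ℕ) (ω : Ω) : S n ω ≤ L n ω := by
  induction n with
  | zero => simp [h.S_zero, h.L_zero]
  | succ n ih =>
    have := abs_le.mp (h.abs_X_le (n + 1) ω)
    rw [h.S_succ, h.L_succ]
    split_ifs <;> omega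

lemma abs_S_sub_mul_le {c : ℝ} (hc0 : 0 ≤ c) (hc1 : c ≤ 1) (n : ℕ) (ω : Ω) :
    |(S n ω : ℝ) - c * n| ≤ 2 * n := by
  have hs : |(S n ω : ℝ)| ≤ n := by exact_mod_cast h.abs_S_le n ω
  have hcn : c * n ≤ n := mul_le_of_le_one_left n.cast_nonneg hc1
  rw [abs_le] at hs ⊢
  constructor <;> nlinarith

lemma abs_L_sub_S_le (n : ℕ) (ω : Ω) : |(L n ω : ℝ) - S n ω| ≤ 2 * n := by
  have := abs_le.mp (h.abs_S_le n ω)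
  have := h.L_nonneg_and_le n ω
  have : |L n ω - S n ω| ≤ 2 * n := by rw [abs_le]; omega
  exact_mod_cast this

lemma driftProduct_succ (c : ℝ) (n : ℕ) (ω : Ω) :
    driftProduct c L S (n + 1) ω = driftProduct c L S n ω
      + ((X (n + 1) ω : ℝ) - c) * ((L n ω : ℝ) - S n ω) + reflectionTerm c X L S n ω := by
  unfold driftProduct reflectionTerm
  rw [h.L_succ, h.S_succ]
  split_ifs with h0
  · rw [h0]; push_cast; ring
  · push_cast; ring

lemma reflectionTerm_nonpos {c : ℝ} (hc0 : 0 ≤ c) (n : ℕ) (ω : Ω) :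
    reflectionTerm c X L S n ω ≤ 0 := by
  unfold reflectionTerm
  split_ifs with h0
  · have hS : (S n ω : ℝ) ≤ 0 := by exact_mod_cast h0 ▸ h.S_le_L n ω
    have : 0 ≤ c * (n + 1) := by positivity
    rw [h.S_succ]
    rcases h.pm_one (n + 1) ω with hx | hx <;> rw [hx] <;> push_cast <;> nlinarith
  · rfl

lemma neg_four_mul_le_reflectionTerm {c : ℝ} (hc1 : c ≤ 1) (n : ℕ) (ω : Ω) :
    -4 * ((n : ℝ) + 1) * (if L n ω = 0 then 1 else 0) ≤ reflectionTerm c X L S n ω := by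
  unfold reflectionTerm
  split_ifs with h0
  · have hS : -(n : ℝ) ≤ S n ω := by exact_mod_cast (abs_le.mp (h.abs_S_le n ω)).1
    have : c * (n + 1) ≤ n + 1 := mul_le_of_le_one_left (by positivity) hc1
    rw [h.S_succ]
    rcases h.pm_one (n + 1) ω with hx | hx <;> rw [hx] <;> push_cast <;> nlinarith
  · simp

lemma measurable_S (n : ℕ) : Measurable[stepsUpTo X n] (S n) := by
  rw [funext (h.S_eq n)]
  exact Finset.measurable_sum _ fun i hi =>
    measurable_stepsUpTo X le_add_self (Finset.mem_range.mp hi)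

lemma measurable_L (n : ℕ) : Measurable[stepsUpTo X n] (L n) := by
  induction n with
  | zero => rw [funext h.L_zero]; exact measurable_const
  | succ n ih =>
    have ih' := ih.mono (stepsUpTo_mono X n.le_succ) le_rfl
    rw [funext (h.L_succ n)]
    exact Measurable.ite (ih' (measurableSet_singleton 0)) measurable_const
      (ih'.add (measurable_stepsUpTo X le_add_self le_rfl))

lemma measurable_L_sub_S (n : ℕ) :
    Measurable[stepsUpTo X n] (fun ω => (L n ω : ℝ) - S n ω) :=
  (Measurable.of_discrete.comp (h.measurable_L n)).sub
    (Measurable.of_discrete.comp (h.measurable_S n))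

variable {mΩ : MeasurableSpace Ω} {μ : Measure Ω} (hX : ∀ i, Measurable (X i))
include hX

lemma integrable_X [IsFiniteMeasure μ] (i : ℕ) : Integrable (fun ω => (X i ω : ℝ)) μ :=
  .of_bound (Measurable.of_discrete.comp (hX i)).aestronglyMeasurable 1
    (ae_of_all _ fun ω => by rw [Real.norm_eq_abs]; exact_mod_cast h.abs_X_le i ω)

lemma integrable_driftProduct [IsFiniteMeasure μ] {c : ℝ} (hc0 : 0 ≤ c) (hc1 : c ≤ 1)
    (n : ℕ) : Integrable (driftProduct c L S n) μ := by
  have hm : Measurable[stepsUpTo X n] (driftProduct c L S n) :=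
    ((Measurable.of_discrete.comp (h.measurable_S n)).sub_const _).mul (h.measurable_L_sub_S n)
  refine .of_bound (hm.mono (stepsUpTo_le hX n) le_rfl).aestronglyMeasurable (2 * n * (2 * n))
    (ae_of_all _ fun ω => ?_)
  rw [Real.norm_eq_abs, driftProduct, abs_mul]
  exact mul_le_mul (h.abs_S_sub_mul_le hc0 hc1 n ω) (h.abs_L_sub_S_le n ω) (abs_nonneg _)
    (by positivity)

lemma integral_increment_mul_L_sub_S [IsProbabilityMeasure μ] (hind : iIndepFun X μ) {c : ℝ}
    {n : ℕ} (hEX : ∫ ω, (X (n + 1) ω : ℝ) ∂μ = c) :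
    ∫ ω, ((X (n + 1) ω : ℝ) - c) * ((L n ω : ℝ) - S n ω) ∂μ = 0 := by
  have := IndepFun.integral_sub_integral_mul_eq_zero (Y := fun ω => (L n ω : ℝ) - S n ω)
    (Z := fun ω => (X (n + 1) ω : ℝ))
    ((indepFun_of_measurable_stepsUpTo hX hind (h.measurable_L_sub_S n)).comp measurable_id
      Measurable.of_discrete)
    ((h.measurable_L_sub_S n).mono (stepsUpTo_le hX n) le_rfl).aestronglyMeasurable
    (h.integrable_X hX (n + 1))
  simpa only [hEX] using this

lemma integral_driftProduct_succ_sub [IsProbabilityMeasure μ] (hind : iIndepFun X μ) {c : ℝ}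
    (hc0 : 0 ≤ c) (hc1 : c ≤ 1) {n : ℕ} (hEX : ∫ ω, (X (n + 1) ω : ℝ) ∂μ = c) :
    ∫ ω, driftProduct c L S (n + 1) ω ∂μ - ∫ ω, driftProduct c L S n ω ∂μ
      = ∫ ω, reflectionTerm c X L S n ω ∂μ :=
  integral_sub_integral_eq_of_eq_add (h.integrable_driftProduct hX hc0 hc1 n)
    (h.integrable_driftProduct hX hc0 hc1 (n + 1))
    (((h.integrable_X hX (n + 1)).sub (integrable_const c)).mul_bdd
      ((h.measurable_L_sub_S n).mono (stepsUpTo_le hX n) le_rfl).aestronglyMeasurable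
      (ae_of_all _ (h.abs_L_sub_S_le n)))
    (h.driftProduct_succ c n) (h.integral_increment_mul_L_sub_S hX hind hEX)

end IsNaturalCoupling

theorem stmt16_general {Ω : Type*} [MeasurableSpace Ω] (μ : Measure Ω) [IsProbabilityMeasure μ]
    (d : ℕ) (hd : 2 ≤ d) (X L S : ℕ → Ω → ℤ) (D U : ℕ → Ω → ℝ)
    (hmX : ∀ i, Measurable (X i))
    (hXpm : ∀ i ω, X i ω = 1 ∨ X i ω = -1)
    (hindep : iIndepFun X μ)
    (h1 : ∀ i, μ {ω | X i ω = 1} = ENNReal.ofReal ((2 * d - 1) / (2 * d)))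
    (hL0 : ∀ ω, L 0 ω = 0)
    (hLrec : ∀ n ω, L (n + 1) ω = if L n ω = 0 then 1 else L n ω + X (n + 1) ω)
    (hS : ∀ n ω, S n ω = ∑ i ∈ Finset.range n, X (i + 1) ω)
    (hD : ∀ n ω, D n ω = (L n ω : ℝ) - (S n ω : ℝ))
    (hU : ∀ n ω, U n ω = ((S n ω : ℝ) - (d - 1) / d * n) * D n ω) :
    (∀ n ω, U (n + 1) ω
      = U n ω + ((X (n + 1) ω : ℝ) - (d - 1) / d) * D n ω
        + (if L n ω = 0
            then (1 - (X (n + 1) ω : ℝ)) * ((S (n + 1) ω : ℝ) - (d - 1) / d * (n + 1))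
            else 0)) ∧
    ∀ n : ℕ,
      -4 * (n + 1) * (μ {ω | L n ω = 0}).toReal
          ≤ (∫ ω, U (n + 1) ω ∂μ) - ∫ ω, U n ω ∂μ ∧
      (∫ ω, U (n + 1) ω ∂μ) - ∫ ω, U n ω ∂μ ≤ 0 := by
  have hcoup : IsNaturalCoupling X L S := ⟨hXpm, hL0, hLrec, hS⟩
  set c : ℝ := ((d : ℝ) - 1) / d with hc
  have hd' : (2 : ℝ) ≤ d := by exact_mod_cast hd
  have hc0 : 0 ≤ c := div_nonneg (by linarith) (by linarith)
  have hc1 : c ≤ 1 := div_le_one_of_le₀ (by linarith) (by linarith)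
  have hEX : ∀ i, ∫ ω, (X i ω : ℝ) ∂μ = c := fun i => by
    rw [integral_intCast_of_pm_one (hmX i) (hXpm i) (div_nonneg (by linarith) (by linarith)) (h1 i),
      hc]
    field_simp
    ring
  obtain rfl : D = fun n ω => (L n ω : ℝ) - S n ω := funext₂ hD
  obtain rfl : U = driftProduct c L S := funext₂ hU
  refine ⟨hcoup.driftProduct_succ c, fun n => ?_⟩
  rw [hcoup.integral_driftProduct_succ_sub hmX hindep hc0 hc1 (hEX (n + 1))]
  exact ⟨mul_measureReal_le_integral (A := {ω | L n ω = 0})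
      ((hcoup.measurable_L n).mono (stepsUpTo_le hmX n) le_rfl (measurableSet_singleton 0)) _
      (hcoup.reflectionTerm_nonpos hc0 n) (hcoup.neg_four_mul_le_reflectionTerm hc1 n),
    integral_nonpos (hcoup.reflectionTerm_nonpos hc0 n)⟩

theorem stmt16 {Ω : Type*} [MeasurableSpace Ω] (μ : Measure Ω) [IsProbabilityMeasure μ]
    (d : ℕ) (hd : 2 ≤ d) (X L S : ℕ → Ω → ℤ) (D U : ℕ → Ω → ℝ)
    (hmX : ∀ i, Measurable (X i)) (hmL : ∀ n, Measurable (L n))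
    (hXpm : ∀ i ω, X i ω = 1 ∨ X i ω = -1)
    (hindep : iIndepFun X μ)
    (h1 : ∀ i, μ {ω | X i ω = 1} = ENNReal.ofReal ((2 * d - 1) / (2 * d)))
    (hL0 : ∀ ω, L 0 ω = 0)
    (hLrec : ∀ n ω, L (n + 1) ω = if L n ω = 0 then 1 else L n ω + X (n + 1) ω)
    (hS : ∀ n ω, S n ω = ∑ i ∈ Finset.range n, X (i + 1) ω)
    (hD : ∀ n ω, D n ω = (L n ω : ℝ) - (S n ω : ℝ))
    (hU : ∀ n ω, U n ω = ((S n ω : ℝ) - (d - 1) / d * n) * D n ω) :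
    (∀ n ω, U (n + 1) ω
      = U n ω + ((X (n + 1) ω : ℝ) - (d - 1) / d) * D n ω
        + (if L n ω = 0
            then (1 - (X (n + 1) ω : ℝ)) * ((S (n + 1) ω : ℝ) - (d - 1) / d * (n + 1))
            else 0)) ∧
    ∀ n : ℕ,
      -4 * (n + 1) * (μ {ω | L n ω = 0}).toReal
          ≤ (∫ ω, U (n + 1) ω ∂μ) - ∫ ω, U n ω ∂μ ∧
      (∫ ω, U (n + 1) ω ∂μ) - ∫ ω, U n ω ∂μ ≤ 0 :=
  stmt16_general μ d hd X L S D U hmX hXpm hindep h1 hL0 hLrec hS hD hU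
end
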